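/- Let a = (a₁,a₂), c = (c₁,c₂) ∈ K² with |a₁ − c₁| ≠ |a₂ − c₂|. If b, b' ∈ K² satisfy ‖c − a‖₁ = ‖c − b‖₁ + ‖b − a‖₁ and ‖c − a‖₁ = ‖c − b'‖₁ + ‖b' − a‖₁, together with ‖c − b‖₁ = ‖c − b'‖₁ and ‖b − a‖₁ = ‖b' − a‖₁, then b = b'. -/

import Mathlib

/-!
By the ultrametric inequality, `|x + y| = |x| + |y|` forces `x = 0` or `y = 0`. Equality in the
ℓ¹ triangle inequality `‖c - a‖₁ ≤ ‖c - b‖₁ + ‖b - a‖₁` is equality in both coordinates, so each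
`bᵢ` is `cᵢ` or `aᵢ`: `b` is one of the four corners of the box spanned by `a` and `c`. Then
`‖c - b‖₁` is a sum `e₁ + e₂` with `eᵢ ∈ {0, |cᵢ - aᵢ|}`, and since `|c₁ - a₁| ≠ |c₂ - a₂|` such a
sum determines both summands, hence the corner.
-/

theorem eq_and_eq_of_add_eq_add_of_eq_zero_or_eq {S : Type*} [CommRing S] [LinearOrder S]
    [IsStrictOrderedRing S] {d₁ d₂ e₁ e₂ f₁ f₂ : S} (hd₁ : 0 ≤ d₁) (hd₂ : 0 ≤ d₂) (hd : d₁ ≠ d₂)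
    (he₁ : e₁ = 0 ∨ e₁ = d₁) (he₂ : e₂ = 0 ∨ e₂ = d₂)
    (hf₁ : f₁ = 0 ∨ f₁ = d₁) (hf₂ : f₂ = 0 ∨ f₂ = d₂) (h : e₁ + e₂ = f₁ + f₂) :
    e₁ = f₁ ∧ e₂ = f₂ := by
  rcases he₁ with rfl | rfl <;> rcases he₂ with rfl | rfl <;>
    rcases hf₁ with rfl | rfl <;> rcases hf₂ with rfl | rfl <;> grind

namespace AbsoluteValue

def ofIsNonarchimedean {R S : Type*} [Semiring R] [Semiring S] [LinearOrder S]
    [IsStrictOrderedRing S] (f : R → S) (hnonneg : ∀ x, 0 ≤ f x) (hzero : ∀ x, f x = 0 ↔ x = 0)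
    (hmul : ∀ x y, f (x * y) = f x * f y) (hna : IsNonarchimedean f) : AbsoluteValue R S where
  toFun := f
  map_mul' := hmul
  nonneg' := hnonneg
  eq_zero' := hzero
  add_le' _ _ := hna.add_le hnonneg

section OrderedSemiring

variable {R S : Type*} [Ring R] [Semiring S] [PartialOrder S] (abv : AbsoluteValue R S)

def l1Dist (p q : R × R) : S := abv (p.1 - q.1) + abv (p.2 - q.2)

theorem map_sub_eq_zero_or_eq {a c x : R} (hx : x = c ∨ x = a) :
    abv (c - x) = 0 ∨ abv (c - x) = abv (c - a) := by
  rcases hx with rfl | rfl <;> simp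

theorem eq_of_map_sub_eq {a c x y : R} (hx : x = c ∨ x = a) (hy : y = c ∨ y = a)
    (h : abv (c - x) = abv (c - y)) : x = y := by
  rcases hx with rfl | rfl <;> rcases hy with rfl | rfl
  · rfl
  · exact (abv.map_sub_eq_zero_iff _ _).mp (by simpa using h.symm)
  · exact ((abv.map_sub_eq_zero_iff _ _).mp (by simpa using h)).symm
  · rfl

end OrderedSemiring

variable {R S : Type*} [Ring R] [CommRing S] [LinearOrder S] [IsStrictOrderedRing S]
  (abv : AbsoluteValue R S)

theorem eq_zero_or_eq_zero_of_map_add_eq_add (hna : IsNonarchimedean abv) {x y : R}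
    (h : abv (x + y) = abv x + abv y) : x = 0 ∨ y = 0 := by
  have hmax := hna x y
  rcases le_total (abv x) (abv y) with hle | hle
  · left
    rw [sup_eq_right.mpr hle] at hmax
    exact abv.eq_zero.mp (le_antisymm (by linarith) (abv.nonneg x))
  · right
    rw [sup_eq_left.mpr hle] at hmax
    exact abv.eq_zero.mp (le_antisymm (by linarith) (abv.nonneg y))

theorem eq_or_eq_of_map_sub_eq_add (hna : IsNonarchimedean abv) {a c x : R}
    (h : abv (c - a) = abv (c - x) + abv (x - a)) : x = c ∨ x = a := by
  rw [← sub_add_sub_cancel c x a] at h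
  rcases abv.eq_zero_or_eq_zero_of_map_add_eq_add hna h with hcx | hxa
  · exact .inl (sub_eq_zero.mp hcx).symm
  · exact .inr (sub_eq_zero.mp hxa)

theorem map_sub_eq_add_and_map_sub_eq_add_of_l1Dist_eq_add {a c x : R × R}
    (h : abv.l1Dist c a = abv.l1Dist c x + abv.l1Dist x a) :
    abv (c.1 - a.1) = abv (c.1 - x.1) + abv (x.1 - a.1) ∧
      abv (c.2 - a.2) = abv (c.2 - x.2) + abv (x.2 - a.2) := by
  unfold l1Dist at h
  have h₁ := abv.sub_le c.1 x.1 a.1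
  have h₂ := abv.sub_le c.2 x.2 a.2
  constructor <;> linarith

theorem eq_of_l1Dist_eq_of_l1Dist_eq_add (hna : IsNonarchimedean abv) {a c x y : R × R}
    (hac : abv (c.1 - a.1) ≠ abv (c.2 - a.2))
    (hx : abv.l1Dist c a = abv.l1Dist c x + abv.l1Dist x a)
    (hy : abv.l1Dist c a = abv.l1Dist c y + abv.l1Dist y a)
    (h : abv.l1Dist c x = abv.l1Dist c y) : x = y := by
  obtain ⟨hx₁, hx₂⟩ := abv.map_sub_eq_add_and_map_sub_eq_add_of_l1Dist_eq_add hx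
  obtain ⟨hy₁, hy₂⟩ := abv.map_sub_eq_add_and_map_sub_eq_add_of_l1Dist_eq_add hy
  replace hx₁ := abv.eq_or_eq_of_map_sub_eq_add hna hx₁
  replace hx₂ := abv.eq_or_eq_of_map_sub_eq_add hna hx₂
  replace hy₁ := abv.eq_or_eq_of_map_sub_eq_add hna hy₁
  replace hy₂ := abv.eq_or_eq_of_map_sub_eq_add hna hy₂
  obtain ⟨h₁, h₂⟩ := eq_and_eq_of_add_eq_add_of_eq_zero_or_eq (abv.nonneg _) (abv.nonneg _) hac
    (abv.map_sub_eq_zero_or_eq hx₁) (abv.map_sub_eq_zero_or_eq hx₂)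
    (abv.map_sub_eq_zero_or_eq hy₁) (abv.map_sub_eq_zero_or_eq hy₂) h
  exact Prod.ext (abv.eq_of_map_sub_eq hx₁ hy₁ h₁) (abv.eq_of_map_sub_eq hx₂ hy₂ h₂)

end AbsoluteValue

theorem stmt_10_general {K : Type*} [Field K] (v : K → ℝ)
    (hnonneg : ∀ a : K, 0 ≤ v a)
    (hzero : ∀ a : K, v a = 0 ↔ a = 0)
    (hmul : ∀ a b : K, v (a * b) = v a * v b)
    (hultra : ∀ a b : K, v (a + b) ≤ max (v a) (v b))
    (a c : K × K) (hne : v (a.1 - c.1) ≠ v (a.2 - c.2))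
    (b b' : K × K)
    (hb : v (c.1 - a.1) + v (c.2 - a.2)
      = (v (c.1 - b.1) + v (c.2 - b.2)) + (v (b.1 - a.1) + v (b.2 - a.2)))
    (hb' : v (c.1 - a.1) + v (c.2 - a.2)
      = (v (c.1 - b'.1) + v (c.2 - b'.2)) + (v (b'.1 - a.1) + v (b'.2 - a.2)))
    (hcb : v (c.1 - b.1) + v (c.2 - b.2) = v (c.1 - b'.1) + v (c.2 - b'.2)) :
    b = b' := by
  let abv := AbsoluteValue.ofIsNonarchimedean v hnonneg hzero hmul hultra
  have hac : abv (c.1 - a.1) ≠ abv (c.2 - a.2) := by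
    rwa [abv.map_sub c.1, abv.map_sub c.2]
  exact abv.eq_of_l1Dist_eq_of_l1Dist_eq_add hultra hac hb hb' hcb

/-- if `|a₁ − c₁| ≠ |a₂ − c₂|`, then a point `b` lying "metrically
between" `a` and `c` is uniquely determined by the distances `‖c − b‖₁` and
`‖b − a‖₁`. -/
theorem stmt_10 {K : Type*} [Field K] (v : K → ℝ)
    (hnonneg : ∀ a : K, 0 ≤ v a)
    (hzero : ∀ a : K, v a = 0 ↔ a = 0)
    (hmul : ∀ a b : K, v (a * b) = v a * v b)
    (hultra : ∀ a b : K, v (a + b) ≤ max (v a) (v b))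
    (a c : K × K) (hne : v (a.1 - c.1) ≠ v (a.2 - c.2))
    (b b' : K × K)
    (hb : v (c.1 - a.1) + v (c.2 - a.2)
      = (v (c.1 - b.1) + v (c.2 - b.2)) + (v (b.1 - a.1) + v (b.2 - a.2)))
    (hb' : v (c.1 - a.1) + v (c.2 - a.2)
      = (v (c.1 - b'.1) + v (c.2 - b'.2)) + (v (b'.1 - a.1) + v (b'.2 - a.2)))
    (hcb : v (c.1 - b.1) + v (c.2 - b.2) = v (c.1 - b'.1) + v (c.2 - b'.2))
    (hba : v (b.1 - a.1) + v (b.2 - a.2) = v (b'.1 - a.1) + v (b'.2 - a.2)) :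
    b = b' :=
  stmt_10_general v hnonneg hzero hmul hultra a c hne b b' hb hb' hcb
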